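/- Let A, Q ⊆ ℝ³ be periodic point sets with a common full-rank lattice Λ and unit cell U, with motifs M_A = A ∩ U and M_Q = Q ∩ U of equal cardinality m, and suppose there is a bijection γ: M_A → M_Q with ‖a − γ(a)‖ ≤ δ for all a ∈ M_A, extended Λ-periodically. Then for all k ≥ 0 and t ≥ 0, |vol(E_k(A,t) ∩ U) − vol(E_k(Q,t) ∩ U)| ≤ m · (4π/3)(3δt² + δ³/4), where E_k(S,t) is the set of points contained in exactly k closed balls of radius t around points of S. -/

import Mathlib

open MeasureTheory Set Metric Pointwise

noncomputable section

/-- 3-dimensional Euclidean space. -/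
abbrev E3 := EuclideanSpace ℝ (Fin 3)

/-- The lattice generated by the vectors `b 0, b 1, b 2`. -/
def lat (b : Fin 3 → E3) : Set E3 := {x | ∃ n : Fin 3 → ℤ, x = ∑ i, (n i : ℝ) • b i}

/-- The unit cell spanned by the vectors `b 0, b 1, b 2`. -/
def cell (b : Fin 3 → E3) : Set E3 :=
  {x | ∃ c : Fin 3 → ℝ, (∀ i, 0 ≤ c i ∧ c i < 1) ∧ x = ∑ i, c i • b i}

/-- The `k`-fold cover: points lying in at least `k` closed balls of radius `t`
centered at points of `A`. -/
def coverGE (A : Set E3) (t : ℝ) (k : ℕ) : Set E3 :=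
  {x | ∃ F : Finset E3, F.card = k ∧ ↑F ⊆ A ∧ ∀ a ∈ F, dist x a ≤ t}

/-- Points lying in exactly `k` closed balls of radius `t` centered at points of `A`. -/
def coverEQ (A : Set E3) (t : ℝ) (k : ℕ) : Set E3 :=
  {x | ∃ F : Finset E3, ↑F = {a ∈ A | dist x a ≤ t} ∧ F.card = k}

/-- The `k`-th Dirichlet–Voronoi domain of `a` in `A` (with `D_0 = ∅`). -/
def DV (A : Set E3) (a : E3) : ℕ → Set E3
  | 0 => ∅
  | (k+1) => {x | ({b ∈ A | dist x b < dist x a}).ncard ≤ k}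

/-- The `k`-th Brillouin zone of `a` in `A`. -/
def BZ (A : Set E3) (a : E3) (k : ℕ) : Set E3 := DV A a k \ DV A a (k-1)

/-!
Write `N_f(x) = ∑_{a ∈ M} #{l ∈ Λ : ‖x - (f a + l)‖ ≤ t}` for the number of balls around the
translates of the motif points `f a` that contain `x`; because distinct points of the unit cell lie
in distinct cosets of `Λ`, the exact-`k` cover of `M + Λ` is the level set `{N_id = k}`, and that of
`Q` is `{N_γ = k}`. Moving one motif point from `a` to `q` changes `N` only on
`(B(a,t) ∆ B(q,t)) + Λ`, which meets the unit cell in volume at most `vol (B(a,t) ∆ B(q,t))`.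
The symmetric difference lies in the annulus of radii `t ± δ/2` around the midpoint of `a` and `q`,
of volume `(4π/3)((t + δ/2)³ - (t - δ/2)³) = (4π/3)(3δt² + δ³/4)`. Moving the `m` points one at a
time gives the bound.
-/

open Submodule ZSpan
open scoped symmDiff

lemma lat_eq_span (b : Fin 3 → E3) : lat b = span ℤ (range b) := by
  ext x
  simp only [lat, mem_ofPred_eq, SetLike.mem_coe, mem_span_range_iff_exists_fun]
  exact exists_congr fun n => by simp [eq_comm, Int.cast_smul_eq_zsmul]

lemma cell_eq_fundamentalDomain (B : Module.Basis (Fin 3) ℝ E3) :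
    cell B = fundamentalDomain B := by
  ext x
  simp only [cell, mem_ofPred_eq, mem_fundamentalDomain, mem_Ico]
  constructor
  · rintro ⟨c, hc, rfl⟩ i
    rw [B.repr_sum_self]
    exact hc i
  · exact fun h => ⟨fun i => B.repr x i, h, (B.sum_repr x).symm⟩

lemma eq_of_add_eq_add_of_mem_cell (B : Module.Basis (Fin 3) ℝ E3) {a a' l l' : E3}
    (ha : a ∈ cell B) (ha' : a' ∈ cell B) (hl : l ∈ lat B) (hl' : l' ∈ lat B)
    (h : a + l = a' + l') : a = a' := by
  rw [cell_eq_fundamentalDomain, ← fract_eq_self] at ha ha'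
  rw [lat_eq_span] at hl hl'
  rw [← ha, ← ha', ← fract_add_ZSpan B a hl, ← fract_add_ZSpan B a' hl', h]

lemma volume_cell_ne_top (B : Module.Basis (Fin 3) ℝ E3) : volume (cell B) ≠ ⊤ := by
  rw [cell_eq_fundamentalDomain]
  exact (fundamentalDomain_isBounded B).measure_lt_top.ne

def latCount (b : Fin 3 → E3) (t : ℝ) (c x : E3) : ℕ :=
  {l ∈ lat b | dist x (c + l) ≤ t}.ncard

/-- The exact `k`-cover of `{f a | a ∈ M} + lat b`, each point `f a` counted with multiplicity. -/
def coverEQMotif (b : Fin 3 → E3) (f : E3 → E3) (M : Finset E3) (t : ℝ) (k : ℕ) : Set E3 :=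
  {x | ∑ a ∈ M, latCount b t (f a) x = k}

lemma finite_setOf_mem_lat_dist_le (B : Module.Basis (Fin 3) ℝ E3) (t : ℝ) (c x : E3) :
    {l ∈ lat B | dist x (c + l) ≤ t}.Finite := by
  refine (setFinite_inter B (Metric.isBounded_closedBall (x := x - c) (r := t))).subset ?_
  rintro l ⟨hl, hd⟩
  refine ⟨?_, by rwa [lat_eq_span] at hl⟩
  rwa [Metric.mem_closedBall, dist_comm, dist_sub_eq_dist_add_left, add_comm]

lemma setOf_mem_add_lat_dist_le (b : Fin 3 → E3) (M : Finset E3) (t : ℝ) (x : E3) :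
    {s ∈ (↑M + lat b : Set E3) | dist x s ≤ t} =
      ⋃ a ∈ (M : Set E3), (a + ·) '' {l ∈ lat b | dist x (a + l) ≤ t} := by
  ext s
  simp only [mem_ofPred_eq, mem_add, mem_iUnion, mem_image, Finset.mem_coe]
  constructor
  · rintro ⟨⟨a, ha, l, hl, rfl⟩, hd⟩
    exact ⟨a, ha, l, ⟨hl, hd⟩, rfl⟩
  · rintro ⟨a, ha, l, ⟨hl, hd⟩, rfl⟩
    exact ⟨⟨a, ha, l, hl, rfl⟩, hd⟩

lemma finite_setOf_mem_add_lat_dist_le (B : Module.Basis (Fin 3) ℝ E3) (M : Finset E3)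
    (t : ℝ) (x : E3) : {s ∈ (↑M + lat B : Set E3) | dist x s ≤ t}.Finite := by
  rw [setOf_mem_add_lat_dist_le]
  exact M.finite_toSet.biUnion fun a _ => (finite_setOf_mem_lat_dist_le B t a x).image _

lemma ncard_setOf_mem_add_lat_dist_le (B : Module.Basis (Fin 3) ℝ E3) {M : Finset E3}
    (hM : ↑M ⊆ cell B) (t : ℝ) (x : E3) :
    {s ∈ (↑M + lat B : Set E3) | dist x s ≤ t}.ncard = ∑ a ∈ M, latCount B t a x := by
  have hdisj : (M : Set E3).PairwiseDisjoint
      fun a => (a + ·) '' {l ∈ lat B | dist x (a + l) ≤ t} := by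
    rintro a ha a' ha' hne
    simp only [Function.onFun, disjoint_left, mem_image]
    rintro _ ⟨l, ⟨hl, -⟩, rfl⟩ ⟨l', ⟨hl', -⟩, he⟩
    exact hne (eq_of_add_eq_add_of_mem_cell B (hM ha) (hM ha') hl hl' he.symm)
  rw [setOf_mem_add_lat_dist_le, M.finite_toSet.ncard_biUnion
    (fun a _ => (finite_setOf_mem_lat_dist_le B t a x).image _) hdisj, finsum_mem_coe_finset]
  exact Finset.sum_congr rfl fun a _ => ncard_image_of_injective _ (add_right_injective a)

lemma coverEQ_eq_of_finite {A : Set E3} {t : ℝ} (hA : ∀ x, {a ∈ A | dist x a ≤ t}.Finite)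
    (k : ℕ) : coverEQ A t k = {x | {a ∈ A | dist x a ≤ t}.ncard = k} := by
  ext x
  constructor
  · rintro ⟨F, hF, rfl⟩
    rw [mem_ofPred_eq, ← hF, ncard_coe_finset]
  · intro h
    exact ⟨(hA x).toFinset, (hA x).coe_toFinset, by rwa [← ncard_eq_toFinset_card _ (hA x)]⟩

lemma coverEQ_add_lat (B : Module.Basis (Fin 3) ℝ E3) {M : Finset E3} (hM : ↑M ⊆ cell B)
    (t : ℝ) (k : ℕ) : coverEQ (↑M + lat B) t k = coverEQMotif B id M t k := by
  rw [coverEQ_eq_of_finite (finite_setOf_mem_add_lat_dist_le B M t)]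
  simp only [ncard_setOf_mem_add_lat_dist_le B hM]
  rfl

lemma coverEQMotif_of_bijOn (b : Fin 3 → E3) (f : E3 → E3) {M M' : Finset E3} {γ : E3 → E3}
    (hγ : BijOn γ M M') (t : ℝ) (k : ℕ) :
    coverEQMotif b f M' t k = coverEQMotif b (f ∘ γ) M t k := by
  ext x
  simp only [coverEQMotif, mem_ofPred_eq, Function.comp_apply]
  rw [Finset.sum_nbij (g := fun a => latCount b t (f a) x) γ hγ.mapsTo hγ.injOn hγ.surjOn
    fun _ _ => rfl]

lemma MeasureTheory.IsAddFundamentalDomain.measure_iUnion_vadd_inter_le {G α : Type*} [AddGroup G]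
    [AddAction G α] [MeasurableSpace α] [MeasurableConstVAdd G α] [Countable G] {F : Set α}
    {μ : Measure α} [VAddInvariantMeasure G α μ] (hF : IsAddFundamentalDomain G F μ)
    (S : Set α) : μ ((⋃ g : G, g +ᵥ S) ∩ F) ≤ μ S := by
  rw [iUnion_inter, hF.measure_eq_tsum S]
  exact measure_iUnion_le _

lemma volume_add_lat_inter_cell_le (B : Module.Basis (Fin 3) ℝ E3) (S : Set E3) :
    volume ((S + lat B) ∩ cell B) ≤ volume S := by
  have hS : S + lat B = ⋃ g : (span ℤ (range B)).toAddSubgroup, g +ᵥ S := by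
    ext y
    simp only [mem_add, mem_iUnion, mem_vadd_set, lat_eq_span, SetLike.mem_coe]
    constructor
    · rintro ⟨s, hs, l, hl, rfl⟩
      exact ⟨⟨l, hl⟩, s, hs, add_comm _ _⟩
    · rintro ⟨⟨l, hl⟩, s, hs, rfl⟩
      exact ⟨s, hs, l, hl, add_comm _ _⟩
  have : Countable (span ℤ (range B)).toAddSubgroup :=
    inferInstanceAs (Countable (span ℤ (range B)))
  rw [hS, cell_eq_fundamentalDomain]
  exact (ZSpan.isAddFundamentalDomain' B volume).measure_iUnion_vadd_inter_le S

lemma symmDiff_closedBall_subset {X : Type*} [PseudoMetricSpace X] {a q c : X} {ρ : ℝ}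
    (ha : dist a c ≤ ρ) (hq : dist q c ≤ ρ) (t : ℝ) :
    closedBall a t ∆ closedBall q t ⊆ closedBall c (t + ρ) \ closedBall c (t - ρ) := by
  have key : ∀ {u v : X}, dist u c ≤ ρ → dist v c ≤ ρ → ∀ x ∈ closedBall u t \ closedBall v t,
      x ∈ closedBall c (t + ρ) \ closedBall c (t - ρ) := by
    intro u v hu hv x ⟨hxu, hxv⟩
    simp only [mem_sdiff, mem_closedBall, not_le] at hxu hxv ⊢
    have := dist_triangle x u c
    have := dist_triangle x c v
    have := dist_comm c v
    constructor <;> linarith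
  rintro x (hx | hx)
  exacts [key ha hq x hx, key hq ha x hx]

lemma volume_closedBall_eq_ofReal (x : E3) (r : ℝ) :
    volume (closedBall x r) = ENNReal.ofReal (4 * Real.pi / 3 * r ^ 3) := by
  rcases le_or_gt 0 r with hr | hr
  · rw [EuclideanSpace.volume_closedBall_fin_three, ← ENNReal.ofReal_pow hr,
      ← ENNReal.ofReal_mul (by positivity)]
    ring_nf
  · rw [closedBall_eq_empty.2 hr, measure_empty, ENNReal.ofReal_of_nonpos]
    exact mul_nonpos_of_nonneg_of_nonpos (by positivity) (Odd.pow_neg (by decide) hr).le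

lemma volume_closedBall_diff_closedBall_le (x : E3) {r R : ℝ} (h : r ≤ R) :
    volume (closedBall x R \ closedBall x r) ≤
      ENNReal.ofReal (4 * Real.pi / 3 * (R ^ 3 - r ^ 3)) := by
  rw [measure_sdiff (closedBall_subset_closedBall h) measurableSet_closedBall.nullMeasurableSet
    measure_closedBall_lt_top.ne, volume_closedBall_eq_ofReal, volume_closedBall_eq_ofReal]
  rcases le_or_gt 0 (4 * Real.pi / 3 * r ^ 3) with hr | hr
  · rw [← ENNReal.ofReal_sub _ hr, mul_sub]
  · rw [ENNReal.ofReal_of_nonpos hr.le, tsub_zero, mul_sub]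
    exact ENNReal.ofReal_le_ofReal (by linarith)

lemma volume_symmDiff_closedBall_le {a q : E3} {δ : ℝ} (h : dist a q ≤ δ) (t : ℝ) :
    volume (closedBall a t ∆ closedBall q t) ≤
      ENNReal.ofReal (4 * Real.pi / 3 * (3 * δ * t ^ 2 + δ ^ 3 / 4)) := by
  have hδ : 0 ≤ δ := dist_nonneg.trans h
  have ha : dist a (midpoint ℝ a q) ≤ δ / 2 := by
    rw [dist_left_midpoint]; norm_num; linarith
  have hq : dist q (midpoint ℝ a q) ≤ δ / 2 := by
    rw [dist_right_midpoint]; norm_num; linarith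
  calc volume (closedBall a t ∆ closedBall q t)
      ≤ volume (closedBall (midpoint ℝ a q) (t + δ / 2) \
          closedBall (midpoint ℝ a q) (t - δ / 2)) :=
        measure_mono (symmDiff_closedBall_subset ha hq t)
    _ ≤ ENNReal.ofReal (4 * Real.pi / 3 * ((t + δ / 2) ^ 3 - (t - δ / 2) ^ 3)) :=
        volume_closedBall_diff_closedBall_le _ (by linarith)
    _ = ENNReal.ofReal (4 * Real.pi / 3 * (3 * δ * t ^ 2 + δ ^ 3 / 4)) := by ring_nf

lemma abs_measureReal_inter_sub_le {α : Type*} [MeasurableSpace α] (μ : Measure α)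
    {P P' X U : Set α} (hX : P ∆ P' ⊆ X) (hU : μ U ≠ ⊤) :
    |μ.real (P ∩ U) - μ.real (P' ∩ U)| ≤ μ.real (X ∩ U) := by
  have key : ∀ {R R' : Set α}, R \ R' ⊆ X → μ.real (R ∩ U) ≤ μ.real (R' ∩ U) + μ.real (X ∩ U) := by
    intro R R' hR
    refine (measureReal_mono (s₂ := (R' ∩ U) ∪ (X ∩ U)) ?_ ?_).trans (measureReal_union_le _ _)
    · rintro x ⟨hxR, hxU⟩
      by_cases hxR' : x ∈ R'
      exacts [Or.inl ⟨hxR', hxU⟩, Or.inr ⟨hR ⟨hxR, hxR'⟩, hxU⟩]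
    · exact measure_union_ne_top (measure_inter_ne_top_of_right_ne_top hU)
        (measure_inter_ne_top_of_right_ne_top hU)
  rw [abs_sub_le_iff]
  constructor
  · linarith [key (subset_trans subset_union_left hX)]
  · linarith [key (subset_trans subset_union_right hX)]

section Perturbation

variable (B : Module.Basis (Fin 3) ℝ E3) (M : Finset E3) (t : ℝ) (k : ℕ)

lemma latCount_eq_of_notMem {a q x : E3} (hx : x ∉ (closedBall a t ∆ closedBall q t) + lat B) :
    latCount B t a x = latCount B t q x := by
  unfold latCount
  congr 1
  ext l
  refine and_congr_right fun hl => ?_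
  have key : x - l ∈ closedBall a t ↔ x - l ∈ closedBall q t := by
    by_contra h
    exact hx (mem_add.2 ⟨x - l, by rw [mem_symmDiff]; tauto, l, hl, sub_add_cancel x l⟩)
  simpa only [Metric.mem_closedBall, dist_sub_eq_dist_add_left, add_comm l] using key

lemma abs_volume_coverEQMotif_update_sub_le (f : E3 → E3) (a : E3) {q : E3} {δ : ℝ}
    (hq : dist (f a) q ≤ δ) :
    |volume.real (coverEQMotif B f M t k ∩ cell B) -
        volume.real (coverEQMotif B (Function.update f a q) M t k ∩ cell B)| ≤
      4 * Real.pi / 3 * (3 * δ * t ^ 2 + δ ^ 3 / 4) := by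
  have hδ : 0 ≤ δ := dist_nonneg.trans hq
  have hX : coverEQMotif B f M t k ∆ coverEQMotif B (Function.update f a q) M t k ⊆
      (closedBall (f a) t ∆ closedBall q t) + lat B := by
    intro x hx
    by_contra hxX
    have hsum : ∑ y ∈ M, latCount B t (f y) x =
        ∑ y ∈ M, latCount B t (Function.update f a q y) x := by
      refine Finset.sum_congr rfl fun y _ => ?_
      rcases eq_or_ne y a with rfl | hy
      · rw [Function.update_self]
        exact latCount_eq_of_notMem B t hxX
      · rw [Function.update_of_ne hy]
    simp [mem_symmDiff, coverEQMotif, hsum] at hx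
  refine (abs_measureReal_inter_sub_le volume hX (volume_cell_ne_top B)).trans ?_
  refine ENNReal.toReal_le_of_le_ofReal (by positivity) ?_
  exact (volume_add_lat_inter_cell_le B _).trans (volume_symmDiff_closedBall_le hq t)

lemma abs_volume_coverEQMotif_sub_le (s : Finset E3) {f g : E3 → E3} {δ : ℝ}
    (hfg : ∀ a ∈ M, a ∉ s → f a = g a) (hclose : ∀ a ∈ s, dist (f a) (g a) ≤ δ) :
    |volume.real (coverEQMotif B f M t k ∩ cell B) -
        volume.real (coverEQMotif B g M t k ∩ cell B)| ≤
      s.card * (4 * Real.pi / 3 * (3 * δ * t ^ 2 + δ ^ 3 / 4)) := by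
  induction s using Finset.induction_on generalizing f with
  | empty =>
    have : coverEQMotif B f M t k = coverEQMotif B g M t k := by
      ext x
      simp only [coverEQMotif, mem_ofPred_eq,
        Finset.sum_congr rfl fun a ha => congrArg (latCount B t · x) (hfg a ha (by simp))]
    simp [this]
  | @insert a s ha ih =>
    have hstep := abs_volume_coverEQMotif_update_sub_le B M t k f a
      (hclose a (Finset.mem_insert_self a s))
    have hrest := ih (f := Function.update f a (g a))
      (fun y hy hys => by
        rcases eq_or_ne y a with rfl | hya
        · exact Function.update_self ..
        · rw [Function.update_of_ne hya]
          exact hfg y hy (by simp [hya, hys]))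
      (fun y hy => by
        rw [Function.update_of_ne (ne_of_mem_of_not_mem hy ha)]
        exact hclose y (Finset.mem_insert_of_mem hy))
    rw [Finset.card_insert_of_notMem ha]
    push_cast
    linarith [abs_sub_le (volume.real (coverEQMotif B f M t k ∩ cell B))
      (volume.real (coverEQMotif B (Function.update f a (g a)) M t k ∩ cell B))
      (volume.real (coverEQMotif B g M t k ∩ cell B))]

end Perturbation

theorem exact_cover_volume_perturbation_general (b : Fin 3 → E3) (hb : LinearIndependent ℝ b)
    (MA MQ : Finset E3) (hMA : ↑MA ⊆ cell b) (hMQ : ↑MQ ⊆ cell b)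
    (m : ℕ) (hm : MA.card = m)
    (A Q : Set E3) (hA : A = ↑MA + lat b) (hQ : Q = ↑MQ + lat b)
    (γ : E3 → E3) (hγ : Set.BijOn γ ↑MA ↑MQ)
    (δ : ℝ) (hclose : ∀ a ∈ MA, dist a (γ a) ≤ δ)
    (k : ℕ) (t : ℝ) :
    |(volume (coverEQ A t k ∩ cell b)).toReal -
        (volume (coverEQ Q t k ∩ cell b)).toReal| ≤
      (m : ℝ) * ((4 * Real.pi / 3) * (3 * δ * t ^ 2 + δ ^ 3 / 4)) := by
  obtain ⟨B, rfl⟩ : ∃ B : Module.Basis (Fin 3) ℝ E3, ⇑B = b :=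
    ⟨_, coe_basisOfLinearIndependentOfCardEqFinrank hb (by simp)⟩
  subst hA hQ hm
  rw [coverEQ_add_lat B hMA, coverEQ_add_lat B hMQ, coverEQMotif_of_bijOn _ _ hγ]
  exact abs_volume_coverEQMotif_sub_le B MA t k MA (fun a ha h => absurd ha h) hclose

theorem exact_cover_volume_perturbation (b : Fin 3 → E3) (hb : LinearIndependent ℝ b)
    (MA MQ : Finset E3) (hMA : ↑MA ⊆ cell b) (hMQ : ↑MQ ⊆ cell b)
    (m : ℕ) (hm : MA.card = m) (hm' : MQ.card = m)
    (A Q : Set E3) (hA : A = ↑MA + lat b) (hQ : Q = ↑MQ + lat b)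
    (γ : E3 → E3) (hγ : Set.BijOn γ ↑MA ↑MQ)
    (δ : ℝ) (hδ : 0 ≤ δ) (hclose : ∀ a ∈ MA, dist a (γ a) ≤ δ)
    (k : ℕ) (t : ℝ) (ht : 0 ≤ t) :
    |(volume (coverEQ A t k ∩ cell b)).toReal -
        (volume (coverEQ Q t k ∩ cell b)).toReal| ≤
      (m : ℝ) * ((4 * Real.pi / 3) * (3 * δ * t ^ 2 + δ ^ 3 / 4)) :=
  exact_cover_volume_perturbation_general b hb MA MQ hMA hMQ m hm A Q hA hQ γ hγ δ hclose k t
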